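/- For all f, f' ∈ K[x₁,…,x_{2k}] (polynomials independent of x₀) and all g, g' ∈ R, the following bracket relations hold among the derivations of R': [K_f, K_{f'}] = K_{{f,f'}}, where {f,f'} = Σ_{i=1}^{k}(∂_i f·∂_{k+i}f' + ∂_{k+i}f·∂_i f'); [K_f, A_g] = A_{K_f(g)}; [K_f, B_g] = B_{K_f(g)}; [A_g, A_{g'}] = B_{∂₀(g·g')}; [A_g, B_{g'}] = A_{g·g'}; and [B_g, B_{g'}] = 0. -/

import Mathlib

/-! On `R' = R ⊕ Rθ` the field `K_f` acts componentwise as the derivation `K_f` of `R`, while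
`A_g(a + bθ) = gb + g ∂₀a θ` and `B_g(a + bθ) = gb θ` only shuffle components. Every relation
therefore reduces to an identity in `R`: the Leibniz rule for `K_f`, the commutation
`K_f ∂₀ = ∂₀ K_f` (valid since `∂₀ f = 0`), `2 = 0`, and `[K_f, K_{f'}] = K_{{f,f'}}`, which,
being an identity between derivations of a polynomial ring, need only be checked on the
variables `x_j`. -/

open MvPolynomial

/-- Index type for the variables `x₀, x₁, …, x_{2k}`: `none` is `x₀`, `Sum.inl i` is `x_i`
(for `1 ≤ i ≤ k`) and `Sum.inr i` is `x_{k+i}`. -/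
abbrev CIdx (k : ℕ) := Option (Fin k ⊕ Fin k)

/-- The polynomial ring `R = K[x₀, x₁, …, x_{2k}]`. -/
abbrev CP (K : Type*) [Field K] (k : ℕ) := MvPolynomial (CIdx k) K

/-- The square-zero extension `R' = R[θ]/(θ²)`. -/
abbrev CP' (K : Type*) [Field K] (k : ℕ) := TrivSqZeroExt (CP K k) (CP K k)

noncomputable section

variable (K : Type*) [Field K] (k : ℕ)

/-- The odd-type generator `θ` of `R' = R[θ]/(θ²)`. -/
def theta : CP' K k := TrivSqZeroExt.inr 1

/-- The partial derivative `∂_j` extended componentwise to `R' = R ⊕ Rθ`. -/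
def pd (j : CIdx k) : CP' K k → CP' K k := fun h =>
  TrivSqZeroExt.inl (pderiv j h.fst) + TrivSqZeroExt.inr (pderiv j h.snd)

/-- The derivation `∂_θ` of `R'`: `∂_θ(a + bθ) = b`. -/
def pdTheta : CP' K k → CP' K k := fun h => TrivSqZeroExt.inl h.snd

/-- The half Euler operator `E'(f) = Σ_{i=1}^{k} x_i ∂_i f` on `R`. -/
def eulerHalf (f : CP K k) : CP K k :=
  ∑ i : Fin k, X (some (Sum.inl i)) * pderiv (some (Sum.inl i)) f

/-- The contact vector field `K_f` on `R'`, for `f ∈ K[x₁,…,x_{2k}]`: `K_f(θ) = 0` and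
`K_f(h) = (f + E'f)∂₀h + Σ (∂_{k+i}f ∂_i h + ∂_i f ∂_{k+i} h)`. -/
def KF (f : CP K k) : CP' K k → CP' K k := fun h =>
  TrivSqZeroExt.inl (f + eulerHalf K k f) * pd K k (none : CIdx k) h
    + ∑ i : Fin k,
        (TrivSqZeroExt.inl (pderiv (some (Sum.inr i)) f) * pd K k (some (Sum.inl i)) h
          + TrivSqZeroExt.inl (pderiv (some (Sum.inl i)) f) * pd K k (some (Sum.inr i)) h)

/-- The contact vector field `K_f` acting on `R` itself. -/
def KFR (f : CP K k) : CP K k → CP K k := fun h =>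
  (f + eulerHalf K k f) * pderiv (none : CIdx k) h
    + ∑ i : Fin k,
        (pderiv (some (Sum.inr i)) f * pderiv (some (Sum.inl i)) h
          + pderiv (some (Sum.inl i)) f * pderiv (some (Sum.inr i)) h)

/-- The extra contact field `A_g = g·(θ∂₀ + ∂_θ)`, for `g ∈ R`. -/
def AF (g : CP K k) : CP' K k → CP' K k := fun h =>
  TrivSqZeroExt.inl g * (theta K k * pd K k (none : CIdx k) h + pdTheta K k h)

/-- The extra contact field `B_g = g·θ·∂_θ`, for `g ∈ R`. -/
def BF (g : CP K k) : CP' K k → CP' K k := fun h =>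
  TrivSqZeroExt.inl g * theta K k * pdTheta K k h

/-- The Poisson-type bracket `{f,f'} = Σ (∂_i f ∂_{k+i} f' + ∂_{k+i} f ∂_i f')`. -/
def pbr (f f' : CP K k) : CP K k :=
  ∑ i : Fin k,
    (pderiv (some (Sum.inl i)) f * pderiv (some (Sum.inr i)) f'
      + pderiv (some (Sum.inr i)) f * pderiv (some (Sum.inl i)) f')

end

open TrivSqZeroExt

theorem MvPolynomial.pderiv_pderiv_comm {R σ : Type*} [CommRing R] (i j : σ)
    (p : MvPolynomial σ R) : pderiv i (pderiv j p) = pderiv j (pderiv i p) := by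
  classical
  have hlie : ⁅pderiv (R := R) i, pderiv (R := R) j⁆ = 0 := by
    refine derivation_ext fun l => ?_
    rw [Derivation.commutator_apply, pderiv_X, pderiv_X]
    simp [Pi.single_apply, apply_ite]
  have := DFunLike.congr_fun hlie p
  rwa [Derivation.commutator_apply, Derivation.zero_apply, sub_eq_zero] at this

theorem MvPolynomial.pderiv_eq_zero_of_mem_supported {R σ : Type*} [CommSemiring R] {s : Set σ}
    {i : σ} {p : MvPolynomial σ R} (hp : p ∈ supported R s) (hi : i ∉ s) : pderiv i p = 0 :=
  pderiv_eq_zero_of_notMem_vars fun hv => hi (mem_supported.mp hp hv)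

theorem Derivation.sum_apply {R A M ι : Type*} [CommSemiring R] [CommSemiring A]
    [AddCommMonoid M] [Algebra R A] [Module A M] [Module R M] (s : Finset ι)
    (D : ι → Derivation R A M) (a : A) : (∑ i ∈ s, D i) a = ∑ i ∈ s, D i a := by
  rw [← coeFnAddMonoidHom_apply, map_sum, Finset.sum_apply]
  rfl

section ContactFields

variable {K : Type*} [Field K] {k : ℕ}

noncomputable def contactDerivation (f : CP K k) : Derivation K (CP K k) (CP K k) :=
  (f + eulerHalf K k f) • pderiv none +
    ∑ i : Fin k, (pderiv (some (.inr i)) f • pderiv (some (.inl i))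
      + pderiv (some (.inl i)) f • pderiv (some (.inr i)))

theorem contactDerivation_apply (f a : CP K k) : contactDerivation f a = KFR K k f a := by
  simp only [contactDerivation, KFR, Derivation.add_apply, Derivation.smul_apply,
    Derivation.sum_apply, smul_eq_mul]

@[simp]
theorem contactDerivation_X_none (f : CP K k) :
    contactDerivation f (X none) = f + eulerHalf K k f := by
  simp [contactDerivation_apply, KFR]

@[simp]
theorem contactDerivation_X_inl (f : CP K k) (i : Fin k) :
    contactDerivation f (X (some (.inl i))) = pderiv (some (.inr i)) f := by
  simp [contactDerivation_apply, KFR, pderiv_X, Pi.single_apply]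

@[simp]
theorem contactDerivation_X_inr (f : CP K k) (i : Fin k) :
    contactDerivation f (X (some (.inr i))) = pderiv (some (.inl i)) f := by
  simp [contactDerivation_apply, KFR, pderiv_X, Pi.single_apply]

theorem pbr_comm (f f' : CP K k) : pbr K k f f' = pbr K k f' f :=
  Finset.sum_congr rfl fun _ _ => by ring

theorem KFR_eq_pbr {f f' : CP K k} (h0' : pderiv none f' = 0) : KFR K k f f' = pbr K k f f' := by
  rw [KFR, pbr, h0', mul_zero, zero_add]
  exact Finset.sum_congr rfl fun _ _ => by ring

variable {f f' : CP K k}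

theorem pderiv_none_eulerHalf (h0 : pderiv none f = 0) : pderiv none (eulerHalf K k f) = 0 := by
  rw [eulerHalf, map_sum]
  refine Finset.sum_eq_zero fun i _ => ?_
  rw [pderiv_mul, pderiv_pderiv_comm, h0]
  simp

theorem contactDerivation_pderiv_add (h0 : pderiv none f = 0) (h0' : pderiv none f' = 0)
    (t : CIdx k) :
    contactDerivation f (pderiv t f') + contactDerivation f' (pderiv t f)
      = pderiv t (pbr K k f f') := by
  simp only [contactDerivation_apply, KFR, pbr, map_sum, pderiv_pderiv_comm none t, h0, h0',
    map_zero, mul_zero, zero_add, ← Finset.sum_add_distrib]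
  refine Finset.sum_congr rfl fun i _ => ?_
  simp only [map_add, pderiv_mul, pderiv_pderiv_comm _ t]
  ring

theorem contactDerivation_eulerHalf_add (h0 : pderiv none f = 0) (h0' : pderiv none f' = 0) :
    contactDerivation f (eulerHalf K k f') + contactDerivation f' (eulerHalf K k f)
      = eulerHalf K k (pbr K k f f') + pbr K k f f' := by
  simp only [eulerHalf, map_sum, Derivation.leibniz, smul_eq_mul, contactDerivation_X_inl,
    ← contactDerivation_pderiv_add h0 h0']
  rw [pbr, ← Finset.sum_add_distrib, ← Finset.sum_add_distrib]
  exact Finset.sum_congr rfl fun i _ => by ring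

theorem contactDerivation_lie [CharP K 2] (h0 : pderiv none f = 0) (h0' : pderiv none f' = 0) :
    ⁅contactDerivation f, contactDerivation f'⁆ = contactDerivation (pbr K k f f') := by
  refine derivation_ext fun j => ?_
  rw [Derivation.commutator_apply, CharTwo.sub_eq_add]
  rcases j with _ | i | i
  · have hsymm : contactDerivation f f' + contactDerivation f' f = 0 := by
      rw [contactDerivation_apply, contactDerivation_apply, KFR_eq_pbr h0', KFR_eq_pbr h0,
        pbr_comm f' f, CharTwo.add_self_eq_zero]
    simp only [contactDerivation_X_none, map_add]
    linear_combination hsymm + contactDerivation_eulerHalf_add h0 h0'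
  · simpa using contactDerivation_pderiv_add h0 h0' (some (.inr i))
  · simpa using contactDerivation_pderiv_add h0 h0' (some (.inl i))

theorem contactDerivation_pderiv_none (h0 : pderiv none f = 0) (a : CP K k) :
    contactDerivation f (pderiv none a) = pderiv none (contactDerivation f a) := by
  have hlie : ⁅contactDerivation f, pderiv (R := K) (none : CIdx k)⁆ = 0 := by
    refine derivation_ext fun j => ?_
    rw [Derivation.commutator_apply, Derivation.zero_apply, sub_eq_zero]
    rcases j with _ | i | i <;>
      simp [pderiv_X, h0, pderiv_none_eulerHalf h0, pderiv_pderiv_comm none]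
  have := DFunLike.congr_fun hlie a
  rwa [Derivation.commutator_apply, Derivation.zero_apply, sub_eq_zero] at this

@[simp]
theorem KF_fst (f : CP K k) (h : CP' K k) : (KF K k f h).fst = KFR K k f h.fst := by
  simp [KF, KFR, pd, fst_sum]

@[simp]
theorem KF_snd (f : CP K k) (h : CP' K k) : (KF K k f h).snd = KFR K k f h.snd := by
  simp [KF, KFR, pd, snd_sum, mul_comm]

@[simp]
theorem AF_fst (g : CP K k) (h : CP' K k) : (AF K k g h).fst = g * h.snd := by
  simp [AF, theta, pd, pdTheta]

@[simp]
theorem AF_snd (g : CP K k) (h : CP' K k) : (AF K k g h).snd = g * pderiv none h.fst := by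
  simp [AF, theta, pd, pdTheta, snd_mul]

@[simp]
theorem BF_fst (g : CP K k) (h : CP' K k) : (BF K k g h).fst = 0 := by
  simp [BF, theta, pdTheta]

@[simp]
theorem BF_snd (g : CP K k) (h : CP' K k) : (BF K k g h).snd = g * h.snd := by
  simp [BF, theta, pdTheta, snd_mul, mul_comm]

theorem commutator_KF_KF [CharP K 2] (h0 : pderiv none f = 0) (h0' : pderiv none f' = 0)
    (h : CP' K k) :
    KF K k f (KF K k f' h) - KF K k f' (KF K k f h) = KF K k (pbr K k f f') h := by
  ext1 <;> simp only [fst_sub, snd_sub, KF_fst, KF_snd, ← contactDerivation_apply,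
    ← Derivation.commutator_apply, contactDerivation_lie h0 h0']

theorem commutator_KF_AF (h0 : pderiv none f = 0) (g : CP K k) (h : CP' K k) :
    KF K k f (AF K k g h) - AF K k g (KF K k f h) = AF K k (KFR K k f g) h := by
  ext1 <;> simp only [fst_sub, snd_sub, KF_fst, KF_snd, AF_fst, AF_snd,
    ← contactDerivation_apply, Derivation.leibniz, smul_eq_mul, contactDerivation_pderiv_none h0]
    <;> ring

theorem commutator_KF_BF (f g : CP K k) (h : CP' K k) :
    KF K k f (BF K k g h) - BF K k g (KF K k f h) = BF K k (KFR K k f g) h := by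
  ext1 <;> simp only [fst_sub, snd_sub, KF_fst, KF_snd, BF_fst, BF_snd,
    ← contactDerivation_apply, Derivation.leibniz, smul_eq_mul, map_zero] <;> ring

theorem commutator_AF_AF [CharP K 2] (g g' : CP K k) (h : CP' K k) :
    AF K k g (AF K k g' h) - AF K k g' (AF K k g h) = BF K k (pderiv none (g * g')) h := by
  ext1
  · simp only [fst_sub, AF_fst, AF_snd, BF_fst]
    ring
  · simp only [snd_sub, AF_fst, AF_snd, BF_snd, pderiv_mul, CharTwo.sub_eq_add]
    linear_combination g * g' * pderiv none h.snd * CharTwo.two_eq_zero (R := CP K k)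

theorem commutator_AF_BF [CharP K 2] (g g' : CP K k) (h : CP' K k) :
    AF K k g (BF K k g' h) - BF K k g' (AF K k g h) = AF K k (g * g') h := by
  ext1 <;> simp only [fst_sub, snd_sub, AF_fst, AF_snd, BF_fst, BF_snd, map_zero,
    CharTwo.sub_eq_add] <;> ring

theorem commutator_BF_BF (g g' : CP K k) (h : CP' K k) :
    BF K k g (BF K k g' h) - BF K k g' (BF K k g h) = 0 := by
  ext1 <;> simp only [fst_sub, snd_sub, BF_fst, BF_snd, fst_zero, snd_zero] <;> ring

end ContactFields

theorem extra_contact_relations_general {K : Type*} [Field K] [CharP K 2] {k : ℕ}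
    (f f' : CP K k)
    (hf : f ∈ MvPolynomial.supported K {j : CIdx k | j ≠ none})
    (hf' : f' ∈ MvPolynomial.supported K {j : CIdx k | j ≠ none})
    (g g' : CP K k) :
    (∀ h, KF K k f (KF K k f' h) - KF K k f' (KF K k f h) = KF K k (pbr K k f f') h) ∧
    (∀ h, KF K k f (AF K k g h) - AF K k g (KF K k f h) = AF K k (KFR K k f g) h) ∧
    (∀ h, KF K k f (BF K k g h) - BF K k g (KF K k f h) = BF K k (KFR K k f g) h) ∧
    (∀ h, AF K k g (AF K k g' h) - AF K k g' (AF K k g h)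
        = BF K k (pderiv (none : CIdx k) (g * g')) h) ∧
    (∀ h, AF K k g (BF K k g' h) - BF K k g' (AF K k g h) = AF K k (g * g') h) ∧
    (∀ h, BF K k g (BF K k g' h) - BF K k g' (BF K k g h) = 0) := by
  have h0 : pderiv none f = 0 := pderiv_eq_zero_of_mem_supported hf (by simp)
  have h0' : pderiv none f' = 0 := pderiv_eq_zero_of_mem_supported hf' (by simp)
  exact ⟨commutator_KF_KF h0 h0', commutator_KF_AF h0 g, commutator_KF_BF f g,
    commutator_AF_AF g g', commutator_AF_BF g g', commutator_BF_BF g g'⟩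

/-- For `p = 2`, the bracket relations among the contact fields `K_f` (for `f` independent
of `x₀`, i.e. `f ∈ K[x₁,…,x_{2k}]`) and the extra fields `A_g`, `B_g` on `R' = R[θ]/(θ²)`:
`[K_f, K_{f'}] = K_{{f,f'}}`, `[K_f, A_g] = A_{K_f(g)}`, `[K_f, B_g] = B_{K_f(g)}`,
`[A_g, A_{g'}] = B_{∂₀(gg')}`, `[A_g, B_{g'}] = A_{gg'}` and `[B_g, B_{g'}] = 0`,
where the brackets are commutators of operators on `R'`. -/
theorem extra_contact_relations {K : Type*} [Field K] [CharP K 2] {k : ℕ} (hk : 1 ≤ k)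
    (f f' : CP K k)
    (hf : f ∈ MvPolynomial.supported K {j : CIdx k | j ≠ none})
    (hf' : f' ∈ MvPolynomial.supported K {j : CIdx k | j ≠ none})
    (g g' : CP K k) :
    (∀ h, KF K k f (KF K k f' h) - KF K k f' (KF K k f h) = KF K k (pbr K k f f') h) ∧
    (∀ h, KF K k f (AF K k g h) - AF K k g (KF K k f h) = AF K k (KFR K k f g) h) ∧
    (∀ h, KF K k f (BF K k g h) - BF K k g (KF K k f h) = BF K k (KFR K k f g) h) ∧
    (∀ h, AF K k g (AF K k g' h) - AF K k g' (AF K k g h)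
        = BF K k (pderiv (none : CIdx k) (g * g')) h) ∧
    (∀ h, AF K k g (BF K k g' h) - BF K k g' (AF K k g h) = AF K k (g * g') h) ∧
    (∀ h, BF K k g (BF K k g' h) - BF K k g' (BF K k g h) = 0) :=
  extra_contact_relations_general f f' hf hf' g g'
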